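/- arXiv:1811.03918 — 2 statements merged into one kernel-verified Lean document; each statement's English description precedes it below -/
import Mathlib

section
/- There exist random variables X, Y, U such that ρ(X;Y|U) < essinf_u ρ(X;Y|U=u). Specifically, if P(U=0)=P(U=1)=1/2, and given U=0 the pair (X,Y) has variances (a,b) and correlation η, while given U=1 it has variances (b,a) and correlation η, with 0<a<b and 0<η≤1, then ρ(X;Y|U=0)=ρ(X;Y|U=1)=η but ρ(X;Y|U) = 2η√(ab)/(a+b) < η. -/
open MeasureTheory ProbabilityTheory

noncomputable section

namespace CondCorr

variable {Ω : Type*} [mΩ : MeasurableSpace Ω]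

/-- `E[var(X | m)]`: the expected conditional variance of `X` given a sub-σ-algebra `m`. -/
def evar (μ : Measure Ω) (m : MeasurableSpace Ω) (X : Ω → ℝ) : ℝ :=
  ∫ ω, (X ω - (μ[X|m]) ω) ^ 2 ∂μ

/-- `E[cov(X, Y | m)]`: the expected conditional covariance given a sub-σ-algebra `m`. -/
def ecov (μ : Measure Ω) (m : MeasurableSpace Ω) (X Y : Ω → ℝ) : ℝ :=
  ∫ ω, (X ω - (μ[X|m]) ω) * (Y ω - (μ[Y|m]) ω) ∂μ

/-- Conditional Pearson correlation given a sub-σ-algebra `m`. -/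
def condPearson (μ : Measure Ω) (m : MeasurableSpace Ω) (X Y : Ω → ℝ) : ℝ :=
  if 0 < evar (mΩ := mΩ) μ m X ∧ 0 < evar (mΩ := mΩ) μ m Y then
    ecov (mΩ := mΩ) μ m X Y / (Real.sqrt (evar (mΩ := mΩ) μ m X) * Real.sqrt (evar (mΩ := mΩ) μ m Y))
  else 0

/-- Conditional correlation ratio `θ(X; Y | U)`. -/
def theta {β γ : Type*} [MeasurableSpace β] [MeasurableSpace γ]
    (μ : Measure Ω) (X : Ω → ℝ) (Y : Ω → β) (U : Ω → γ) : ℝ :=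
  sSup {r | ∃ g : β × γ → ℝ, Measurable g ∧
    MemLp (fun ω => g (Y ω, U ω)) 2 μ ∧
    r = condPearson μ (MeasurableSpace.comap U inferInstance) X
          (fun ω => g (Y ω, U ω))}

/-- Conditional maximal correlation `ρ_m(X; Y | U)`. -/
def rhoM {α β γ : Type*} [MeasurableSpace α] [MeasurableSpace β] [MeasurableSpace γ]
    (μ : Measure Ω) (X : Ω → α) (Y : Ω → β) (U : Ω → γ) : ℝ :=
  sSup {r | ∃ f : α × γ → ℝ, ∃ g : β × γ → ℝ, Measurable f ∧ Measurable g ∧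
    MemLp (fun ω => f (X ω, U ω)) 2 μ ∧ MemLp (fun ω => g (Y ω, U ω)) 2 μ ∧
    r = condPearson μ (MeasurableSpace.comap U inferInstance)
          (fun ω => f (X ω, U ω)) (fun ω => g (Y ω, U ω))}

/-- Unconditional Pearson correlation (conditioning on the trivial σ-algebra). -/
def pearson (μ : Measure Ω) (X Y : Ω → ℝ) : ℝ := condPearson μ ⊥ X Y

/-- Unconditional correlation ratio. -/
def theta₀ {β : Type*} [MeasurableSpace β] (μ : Measure Ω) (X : Ω → ℝ) (Y : Ω → β) : ℝ :=
  theta μ X Y (fun _ => (() : Unit))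

/-- Unconditional maximal correlation. -/
def rhoM₀ {α β : Type*} [MeasurableSpace α] [MeasurableSpace β]
    (μ : Measure Ω) (X : Ω → α) (Y : Ω → β) : ℝ :=
  rhoM μ X Y (fun _ => (() : Unit))

end CondCorr

/-!
Conditioning on `U`, which is a.e. valued in a finite set, the conditional expectation of a
square-integrable variable is a.e. its average under `μ[|U = u]` on each fiber `{U = u}`, so the
expected conditional covariance is the `μ`-weighted sum of the covariances on the fibers. In the
example the expected conditional variances of `X` and `Y` are therefore both `(a + b) / 2`,
the expected conditional covariance is `η √(ab)`, and `2 √(ab) < a + b` is strict AM-GM.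
-/

namespace CondCorr

variable {Ω γ : Type*} [mΩ : MeasurableSpace Ω] [mγ : MeasurableSpace γ]
  {μ : Measure Ω} {U : Ω → γ}

lemma two_mul_sqrt_mul_lt_add {a b : ℝ} (ha : 0 ≤ a) (hab : a < b) :
    2 * Real.sqrt (a * b) < a + b := by
  have hsqrt : Real.sqrt a < Real.sqrt b := Real.sqrt_lt_sqrt ha hab
  rw [Real.sqrt_mul ha]
  nlinarith [Real.sq_sqrt ha, Real.sq_sqrt (ha.trans hab.le),
    mul_pos (sub_pos.2 hsqrt) (sub_pos.2 hsqrt)]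

lemma evar_eq_ecov (μ : Measure Ω) (m : MeasurableSpace Ω) (X : Ω → ℝ) :
    evar (mΩ := mΩ) μ m X = ecov (mΩ := mΩ) μ m X X := by
  simp only [evar, ecov, sq]

lemma ecov_bot (ν : Measure Ω) [IsProbabilityMeasure ν] (X Y : Ω → ℝ) :
    ecov ν ⊥ X Y = cov[X, Y; ν] := by
  simp only [ecov, condExp_bot, covariance]

lemma condPearson_of_evar_eq {m : MeasurableSpace Ω} {X Y : Ω → ℝ} {v : ℝ} (hv : 0 < v)
    (hX : evar (mΩ := mΩ) μ m X = v) (hY : evar (mΩ := mΩ) μ m Y = v) :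
    condPearson (mΩ := mΩ) μ m X Y = ecov (mΩ := mΩ) μ m X Y / v := by
  unfold condPearson
  rw [if_pos ⟨hX ▸ hv, hY ▸ hv⟩, hX, hY, Real.mul_self_sqrt hv.le]

lemma setIntegral_eq_measureReal_mul_integral_cond [IsFiniteMeasure μ] (A : Set Ω)
    (g : Ω → ℝ) : ∫ x in A, g x ∂μ = μ.real A * ∫ x, g x ∂μ[|A] := by
  rcases eq_or_ne (μ A) 0 with hA | hA
  · simp [Measure.restrict_eq_zero.2 hA, measureReal_def, hA]
  · rw [ProbabilityTheory.cond, integral_smul_measure, smul_eq_mul, ← mul_assoc,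
      ENNReal.toReal_inv, ← measureReal_def,
      mul_inv_cancel₀ ((measureReal_ne_zero_iff (by finiteness)).2 hA), one_mul]

variable [MeasurableSingletonClass γ]

lemma condExp_comap_ae_eq_integral_cond [IsFiniteMeasure μ] (hU : Measurable U)
    {f : Ω → ℝ} (hf : Integrable f μ) (u : γ) :
    μ[f | mγ.comap U] =ᵐ[μ.restrict {ω | U ω = u}]
      fun _ ↦ ∫ x, f x ∂μ[|{ω | U ω = u}] := by
  set A := {ω | U ω = u}
  have hA : MeasurableSet[mγ.comap U] A := ⟨{u}, measurableSet_singleton u, rfl⟩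
  refine (condExp_restrict_ae_eq_restrict hU.comap_le hA hf).symm.trans
    (ae_eq_condExp_of_forall_setIntegral_eq hU.comap_le hf.restrict
      (fun _ _ _ ↦ integrableOn_const (by finiteness)) ?_ aestronglyMeasurable_const).symm
  -- a `σ(U)`-measurable set `U ⁻¹' S` either contains the fiber or misses it
  rintro _ ⟨S, hS, rfl⟩ -
  rw [Measure.restrict_restrict (hU hS)]
  by_cases hu : u ∈ S
  · have hAS : U ⁻¹' S ∩ A = A :=
      Set.inter_eq_right.2 fun ω (hω : U ω = u) ↦ show U ω ∈ S from hω ▸ hu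
    rw [hAS, setIntegral_const, smul_eq_mul, setIntegral_eq_measureReal_mul_integral_cond]
  · have hAS : U ⁻¹' S ∩ A = ∅ :=
      Set.eq_empty_of_forall_notMem fun ω ⟨hS, (hω : U ω = u)⟩ ↦ hu (hω ▸ hS)
    simp [hAS]

lemma ecov_comap_eq_sum [IsFiniteMeasure μ] (hU : Measurable U) {s : Finset γ}
    (hUs : ∀ᵐ ω ∂μ, U ω ∈ s) {X Y : Ω → ℝ} (hX : MemLp X 2 μ) (hY : MemLp Y 2 μ) :
    ecov μ (mγ.comap U) X Y
      = ∑ u ∈ s, μ.real {ω | U ω = u} * cov[X, Y; μ[|{ω | U ω = u}]] := by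
  have hfiber : ∀ u, MeasurableSet {ω | U ω = u} := fun u ↦ hU (measurableSet_singleton u)
  have hint : Integrable
      (fun ω ↦ (X ω - μ[X | mγ.comap U] ω) * (Y ω - μ[Y | mγ.comap U] ω)) μ :=
    (hX.sub (hX.condExp one_le_two)).integrable_mul (hY.sub (hY.condExp one_le_two))
  have hcover : μ.restrict (⋃ u ∈ s, {ω | U ω = u}) = μ :=
    Measure.restrict_eq_self_of_ae_mem (by simpa using hUs)
  have hsplit := integral_biUnion_finset s (fun u _ ↦ hfiber u)
    (fun u _ v _ huv ↦ Set.disjoint_left.2 fun ω hu hv ↦ huv (hu.symm.trans hv))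
    (fun u _ ↦ hint.integrableOn)
  rw [hcover] at hsplit
  rw [ecov, hsplit]
  refine Finset.sum_congr rfl fun u _ ↦ ?_
  rw [covariance, ← setIntegral_eq_measureReal_mul_integral_cond]
  refine integral_congr_ae ?_
  filter_upwards [condExp_comap_ae_eq_integral_cond hU (hX.integrable one_le_two) u,
    condExp_comap_ae_eq_integral_cond hU (hY.integrable one_le_two) u] with ω hXω hYω
  rw [hXω, hYω]

end CondCorr

namespace CondCorr

theorem condPearson_lt_event_corr_general {Ω : Type*} [mΩ : MeasurableSpace Ω] (μ : Measure Ω)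
    [IsProbabilityMeasure μ] (a b η : ℝ) (ha : 0 < a) (hab : a < b)
    (hη : 0 < η)
    (X Y U : Ω → ℝ) (hX : Measurable X) (hY : Measurable Y) (hU : Measurable U)
    (hX2 : MemLp X 2 μ) (hY2 : MemLp Y 2 μ)
    (hU01 : ∀ᵐ ω ∂μ, U ω = 0 ∨ U ω = 1)
    (h0 : μ {ω | U ω = 0} = 1/2) (h1 : μ {ω | U ω = 1} = 1/2)
    (hvX0 : variance X (μ[|{ω | U ω = 0}]) = a)
    (hvY0 : variance Y (μ[|{ω | U ω = 0}]) = b)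
    (hc0 : ecov (μ[|{ω | U ω = 0}]) ⊥ X Y = η * Real.sqrt (a * b))
    (hvX1 : variance X (μ[|{ω | U ω = 1}]) = b)
    (hvY1 : variance Y (μ[|{ω | U ω = 1}]) = a)
    (hc1 : ecov (μ[|{ω | U ω = 1}]) ⊥ X Y = η * Real.sqrt (a * b)) :
    condPearson μ (MeasurableSpace.comap U inferInstance) X Y
      = 2 * η * Real.sqrt (a * b) / (a + b) ∧
    2 * η * Real.sqrt (a * b) / (a + b) < η := by
  have : IsProbabilityMeasure μ[|{ω | U ω = 0}] := cond_isProbabilityMeasure (by simp [h0])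
  have : IsProbabilityMeasure μ[|{ω | U ω = 1}] := cond_isProbabilityMeasure (by simp [h1])
  have hUs : ∀ᵐ ω ∂μ, U ω ∈ ({0, 1} : Finset ℝ) := by simpa using hU01
  have hsplit : ∀ Z W : Ω → ℝ, MemLp Z 2 μ → MemLp W 2 μ →
      ecov μ (MeasurableSpace.comap U inferInstance) Z W
        = (cov[Z, W; μ[|{ω | U ω = 0}]] + cov[Z, W; μ[|{ω | U ω = 1}]]) / 2 := by
    intro Z W hZ hW
    rw [ecov_comap_eq_sum hU hUs hZ hW, Finset.sum_pair zero_ne_one, measureReal_def,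
      measureReal_def, h0, h1]
    norm_num
    ring
  have hvX : evar μ (MeasurableSpace.comap U inferInstance) X = (a + b) / 2 := by
    rw [evar_eq_ecov, hsplit X X hX2 hX2, covariance_self hX.aemeasurable,
      covariance_self hX.aemeasurable, hvX0, hvX1]
  have hvY : evar μ (MeasurableSpace.comap U inferInstance) Y = (a + b) / 2 := by
    rw [evar_eq_ecov, hsplit Y Y hY2 hY2, covariance_self hY.aemeasurable,
      covariance_self hY.aemeasurable, hvY0, hvY1, add_comm b]
  rw [ecov_bot] at hc0 hc1
  have hab' : 0 < a + b := by linarith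
  refine ⟨?_, ?_⟩
  · rw [condPearson_of_evar_eq (by positivity) hvX hvY, hsplit X Y hX2 hY2, hc0, hc1]
    field_simp
    ring
  · rw [div_lt_iff₀ hab']
    linarith [mul_lt_mul_of_pos_left (two_mul_sqrt_mul_lt_add ha.le hab) hη]

/-- Counterexample: with `P(U=0)=P(U=1)=1/2`, variances `(a,b)` and correlation `η`
given `U=0`, and variances `(b,a)` and correlation `η` given `U=1` (`0<a<b`, `0<η≤1`),
one has `ρ(X;Y|U) = 2η√(ab)/(a+b) < η`. -/
theorem condPearson_lt_event_corr {Ω : Type*} [mΩ : MeasurableSpace Ω] (μ : Measure Ω)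
    [IsProbabilityMeasure μ] (a b η : ℝ) (ha : 0 < a) (hab : a < b)
    (hη : 0 < η) (hη1 : η ≤ 1)
    (X Y U : Ω → ℝ) (hX : Measurable X) (hY : Measurable Y) (hU : Measurable U)
    (hX2 : MemLp X 2 μ) (hY2 : MemLp Y 2 μ)
    (hU01 : ∀ᵐ ω ∂μ, U ω = 0 ∨ U ω = 1)
    (h0 : μ {ω | U ω = 0} = 1/2) (h1 : μ {ω | U ω = 1} = 1/2)
    (hvX0 : variance X (μ[|{ω | U ω = 0}]) = a)
    (hvY0 : variance Y (μ[|{ω | U ω = 0}]) = b)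
    (hc0 : ecov (μ[|{ω | U ω = 0}]) ⊥ X Y = η * Real.sqrt (a * b))
    (hvX1 : variance X (μ[|{ω | U ω = 1}]) = b)
    (hvY1 : variance Y (μ[|{ω | U ω = 1}]) = a)
    (hc1 : ecov (μ[|{ω | U ω = 1}]) ⊥ X Y = η * Real.sqrt (a * b)) :
    condPearson μ (MeasurableSpace.comap U inferInstance) X Y
      = 2 * η * Real.sqrt (a * b) / (a + b) ∧
    2 * η * Real.sqrt (a * b) / (a + b) < η :=
  condPearson_lt_event_corr_general (mΩ := mΩ) μ a b η ha hab hη X Y U hX hY hU hX2 hY2 hU01 h0 h1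
    hvX0 hvY0 hc0 hvX1 hvY1 hc1

end CondCorr
end
end

section
/- (Conditioning reduces covariance gap) For square-integrable real random variables X, Y and any random variable U: √(E[var(X|U)]·E[var(Y|U)]) − E[cov(X,Y|U)] ≤ √(var(X)·var(Y)) − cov(X,Y). -/
open MeasureTheory ProbabilityTheory

noncomputable section

/-!
Write `X - EX = (X - E[X|U]) + (E[X|U] - EX)`, and likewise for `Y`. The two summands are
orthogonal in `L²`, so with `a = E[var(X|U)]`, `b = E[var(Y|U)]`, `c = E[cov(X,Y|U)]` and
`a', b', c'` the variances and covariance of `E[X|U]`, `E[Y|U]`, one has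
`var X = a + a'`, `var Y = b + b'` and `cov(X,Y) = c + c'`. By Cauchy–Schwarz `c' ≤ √(a'b')`,
so the claim reduces to the superadditivity `√(ab) + √(a'b') ≤ √((a+a')(b+b'))`, which is
Cauchy–Schwarz in `ℝ²`.
-/

namespace CondCorr

lemma sqrt_mul_sub_le_sqrt_add_mul_add_sub {a b c a' b' c' : ℝ} (ha : 0 ≤ a) (hb : 0 ≤ b)
    (ha' : 0 ≤ a') (hb' : 0 ≤ b') (hc' : c' ≤ √(a' * b')) :
    √(a * b) - c ≤ √((a + a') * (b + b')) - (c + c') := by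
  have hsuper : √(a * b) + √(a' * b') ≤ √((a + a') * (b + b')) := by
    rw [Real.sqrt_mul ha, Real.sqrt_mul ha']
    apply Real.le_sqrt_of_sq_le
    nlinarith [sq_nonneg (√a * √b' - √a' * √b), Real.sq_sqrt ha, Real.sq_sqrt hb,
      Real.sq_sqrt ha', Real.sq_sqrt hb']
  linarith

section CauchySchwarz

variable {Ω : Type*} {mΩ : MeasurableSpace Ω} {μ : Measure Ω}

lemma integral_mul_le_sqrt_integral_sq_mul {f g : Ω → ℝ} (hf : MemLp f 2 μ) (hg : MemLp g 2 μ) :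
    ∫ ω, f ω * g ω ∂μ ≤ √((∫ ω, f ω ^ 2 ∂μ) * ∫ ω, g ω ^ 2 ∂μ) := by
  calc ∫ ω, f ω * g ω ∂μ ≤ ∫ ω, |f ω| * |g ω| ∂μ :=
        integral_mono (hf.integrable_mul hg) (hf.abs.integrable_mul hg.abs)
          fun ω => by rw [← abs_mul]; exact le_abs_self _
    _ ≤ (∫ ω, |f ω| ^ (2 : ℝ) ∂μ) ^ (1 / 2 : ℝ) * (∫ ω, |g ω| ^ (2 : ℝ) ∂μ) ^ (1 / 2 : ℝ) :=
        integral_mul_le_Lp_mul_Lq_of_nonneg .two_two (.of_forall fun _ => abs_nonneg _)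
          (.of_forall fun _ => abs_nonneg _) (by rw [ENNReal.ofReal_ofNat]; exact hf.abs)
          (by rw [ENNReal.ofReal_ofNat]; exact hg.abs)
    _ = √((∫ ω, f ω ^ 2 ∂μ) * ∫ ω, g ω ^ 2 ∂μ) := by
        simp only [Real.rpow_two, sq_abs, ← Real.sqrt_eq_rpow]
        rw [Real.sqrt_mul (integral_nonneg fun _ => sq_nonneg _)]

lemma covariance_le_sqrt_variance_mul [IsFiniteMeasure μ] {X Y : Ω → ℝ} (hX : MemLp X 2 μ)
    (hY : MemLp Y 2 μ) : cov[X, Y; μ] ≤ √(Var[X; μ] * Var[Y; μ]) := by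
  rw [variance_eq_integral hX.aemeasurable, variance_eq_integral hY.aemeasurable]
  exact integral_mul_le_sqrt_integral_sq_mul (hX.sub (memLp_const _)) (hY.sub (memLp_const _))

end CauchySchwarz

section Conditioning

variable {Ω : Type*} {m : MeasurableSpace Ω} [mΩ : MeasurableSpace Ω] {μ : Measure Ω}

lemma integral_mul_sub_condExp_eq_zero (hm : m ≤ mΩ) [IsFiniteMeasure μ] {g X : Ω → ℝ}
    (hg : StronglyMeasurable[m] g) (hg2 : MemLp g 2 μ) (hX : MemLp X 2 μ) :
    ∫ ω, g ω * (X ω - μ[X|m] ω) ∂μ = 0 := by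
  have hpull : ∫ ω, g ω * X ω ∂μ = ∫ ω, g ω * μ[X|m] ω ∂μ :=
    calc ∫ ω, g ω * X ω ∂μ = ∫ ω, μ[g * X|m] ω ∂μ := (integral_condExp hm).symm
      _ = ∫ ω, g ω * μ[X|m] ω ∂μ := integral_congr_ae <|
          condExp_mul_of_stronglyMeasurable_left hg (hg2.integrable_mul hX)
            (hX.integrable one_le_two)
  have hgX : Integrable (fun ω => g ω * X ω) μ := hg2.integrable_mul hX
  have hgcX : Integrable (fun ω => g ω * μ[X|m] ω) μ :=
    hg2.integrable_mul (hX.condExp one_le_two)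
  simp only [mul_sub]
  rw [integral_sub hgX hgcX, hpull, sub_self]

lemma evar_nonneg (X : Ω → ℝ) : 0 ≤ evar μ m X :=
  integral_nonneg fun _ => sq_nonneg _

lemma integral_condVar_eq_evar (hm : m ≤ mΩ) [SigmaFinite (μ.trim hm)] (X : Ω → ℝ) :
    μ[Var[X; μ | m]] = evar μ m X :=
  integral_condExp hm

lemma variance_eq_evar_add_variance_condExp (hm : m ≤ mΩ) [IsProbabilityMeasure μ]
    {X : Ω → ℝ} (hX : MemLp X 2 μ) : Var[X; μ] = evar μ m X + Var[μ[X|m]; μ] := by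
  rw [← integral_condVar_eq_evar hm, integral_condVar_add_variance_condExp hm hX]

lemma covariance_eq_ecov_add_covariance_condExp (hm : m ≤ mΩ) [IsProbabilityMeasure μ]
    {X Y : Ω → ℝ} (hX : MemLp X 2 μ) (hY : MemLp Y 2 μ) :
    cov[X, Y; μ] = ecov μ m X Y + cov[μ[X|m], μ[Y|m]; μ] := by
  set EX := ∫ ω, X ω ∂μ
  set EY := ∫ ω, Y ω ∂μ
  have hcX : MemLp (μ[X|m]) 2 μ := hX.condExp one_le_two
  have hcY : MemLp (μ[Y|m]) 2 μ := hY.condExp one_le_two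
  have hDX : MemLp (fun ω => X ω - μ[X|m] ω) 2 μ := hX.sub hcX
  have hDY : MemLp (fun ω => Y ω - μ[Y|m] ω) 2 μ := hY.sub hcY
  have hMX : MemLp (fun ω => μ[X|m] ω - EX) 2 μ := hcX.sub (memLp_const EX)
  have hMY : MemLp (fun ω => μ[Y|m] ω - EY) 2 μ := hcY.sub (memLp_const EY)
  have hMXDY : ∫ ω, (μ[X|m] ω - EX) * (Y ω - μ[Y|m] ω) ∂μ = 0 :=
    integral_mul_sub_condExp_eq_zero hm
      (stronglyMeasurable_condExp.sub stronglyMeasurable_const) hMX hY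
  have hMYDX : ∫ ω, (μ[Y|m] ω - EY) * (X ω - μ[X|m] ω) ∂μ = 0 :=
    integral_mul_sub_condExp_eq_zero hm
      (stronglyMeasurable_condExp.sub stronglyMeasurable_const) hMY hX
  have hsplit : ∀ ω, (X ω - EX) * (Y ω - EY) =
      ((X ω - μ[X|m] ω) * (Y ω - μ[Y|m] ω) + (μ[X|m] ω - EX) * (μ[Y|m] ω - EY)) +
      ((μ[X|m] ω - EX) * (Y ω - μ[Y|m] ω) + (μ[Y|m] ω - EY) * (X ω - μ[X|m] ω)) :=
    fun ω => by ring
  have hDD : Integrable (fun ω => (X ω - μ[X|m] ω) * (Y ω - μ[Y|m] ω)) μ :=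
    hDX.integrable_mul hDY
  have hMM : Integrable (fun ω => (μ[X|m] ω - EX) * (μ[Y|m] ω - EY)) μ :=
    hMX.integrable_mul hMY
  have hMD : Integrable (fun ω => (μ[X|m] ω - EX) * (Y ω - μ[Y|m] ω)) μ :=
    hMX.integrable_mul hDY
  have hDM : Integrable (fun ω => (μ[Y|m] ω - EY) * (X ω - μ[X|m] ω)) μ :=
    hMY.integrable_mul hDX
  rw [covariance, integral_congr_ae (.of_forall hsplit),
    integral_add (hDD.fun_add hMM) (hMD.fun_add hDM), integral_add hDD hMM, integral_add hMD hDM,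
    hMXDY, hMYDX, add_zero, add_zero, covariance, integral_condExp hm, integral_condExp hm]
  rfl

end Conditioning

theorem conditioning_reduces_cov_gap_general {Ω : Type*} [mΩ : MeasurableSpace Ω]
    (μ : Measure Ω) [IsProbabilityMeasure μ] {γ : Type*} [MeasurableSpace γ]
    (X Y : Ω → ℝ) (U : Ω → γ)
    (hU : Measurable U)
    (hX2 : MemLp X 2 μ) (hY2 : MemLp Y 2 μ) :
    Real.sqrt (evar μ (MeasurableSpace.comap U inferInstance) X *
        evar μ (MeasurableSpace.comap U inferInstance) Y)
      - ecov μ (MeasurableSpace.comap U inferInstance) X Y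
    ≤ Real.sqrt (variance X μ * variance Y μ)
      - ∫ ω, (X ω - ∫ x, X x ∂μ) * (Y ω - ∫ x, Y x ∂μ) ∂μ := by
  have hm : MeasurableSpace.comap U inferInstance ≤ mΩ := hU.comap_le
  change _ ≤ √(Var[X; μ] * Var[Y; μ]) - cov[X, Y; μ]
  rw [variance_eq_evar_add_variance_condExp hm hX2, variance_eq_evar_add_variance_condExp hm hY2,
    covariance_eq_ecov_add_covariance_condExp hm hX2 hY2]
  exact sqrt_mul_sub_le_sqrt_add_mul_add_sub (evar_nonneg X) (evar_nonneg Y)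
    (variance_nonneg _ _) (variance_nonneg _ _)
    (covariance_le_sqrt_variance_mul (hX2.condExp one_le_two) (hY2.condExp one_le_two))

/-- Conditioning reduces the covariance gap:
`√(E[var(X|U)]·E[var(Y|U)]) − E[cov(X,Y|U)] ≤ √(var(X)·var(Y)) − cov(X,Y)`. -/
theorem conditioning_reduces_cov_gap {Ω : Type*} [mΩ : MeasurableSpace Ω]
    (μ : Measure Ω) [IsProbabilityMeasure μ] {γ : Type*} [MeasurableSpace γ]
    (X Y : Ω → ℝ) (U : Ω → γ)
    (hX : Measurable X) (hY : Measurable Y) (hU : Measurable U)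
    (hX2 : MemLp X 2 μ) (hY2 : MemLp Y 2 μ) :
    Real.sqrt (evar μ (MeasurableSpace.comap U inferInstance) X *
        evar μ (MeasurableSpace.comap U inferInstance) Y)
      - ecov μ (MeasurableSpace.comap U inferInstance) X Y
    ≤ Real.sqrt (variance X μ * variance Y μ)
      - ∫ ω, (X ω - ∫ x, X x ∂μ) * (Y ω - ∫ x, Y x ∂μ) ∂μ :=
  conditioning_reduces_cov_gap_general (mΩ := mΩ) μ X Y U hU hX2 hY2

end CondCorr
end
end
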